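/- arXiv:1701.01092 — 2 statements merged into one kernel-verified Lean document; each statement's English description precedes it below -/
import Mathlib

section
/- Given a finite graph G=(V,E) and weights J: E→ℝ_{>0}, the two couplings between the Ising and FK-Ising measures coincide: the probability measure μ₁ on {−1,+1}^V×{0,1}^E defined by μ₁(σ,ω)=P^FK_J(ω)·2^{−k(ω)}·1{σ is constant on every connected component of (V,{e: ω_e=1})} is equal to the probability measure μ₂ defined by μ₂(σ,ω)=P^Isg_J(σ)·∏_{e∈E}[1{σ_{e₊}σ_{e₋}=−1}1{ω_e=0}+1{σ_{e₊}σ_{e₋}=+1}(1−e^{−2J_e})^{ω_e}(e^{−2J_e})^{1−ω_e}]. -/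
open scoped Classical
noncomputable section

/-- The simple graph on `V` whose edges are the edges `e` of the multigraph
(with endpoint map `ends`) satisfying `p e`. -/
def og {V E : Type} (ends : E → V × V) (p : E → Prop) : SimpleGraph V :=
  SimpleGraph.fromRel (fun v w => ∃ e, p e ∧ (ends e).1 = v ∧ (ends e).2 = w)

/-- Number of connected components (isolated vertices counted) of the subgraph
with edge set `{e | p e}`. -/
def numC {V E : Type} (ends : E → V × V) (p : E → Prop) : ℕ :=
  Nat.card (og ends p).ConnectedComponent

/-- Spin value `+1` or `-1` encoded by a boolean. -/
def spin (b : Bool) : ℝ := if b then 1 else -1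

variable {V E : Type} [Fintype V] [Fintype E]

/-- Unnormalized Ising weight `exp (∑ J_e σ_{e+} σ_{e-})`. -/
def isingW (ends : E → V × V) (J : E → ℝ) (σ : V → Bool) : ℝ :=
  Real.exp (∑ e, J e * spin (σ (ends e).1) * spin (σ (ends e).2))

/-- Ising partition function. -/
def ZIsg (ends : E → V × V) (J : E → ℝ) : ℝ :=
  ∑ σ : V → Bool, isingW ends J σ

/-- Unnormalized FK-Ising weight with weights `1 - e^{-2 J_e}`. -/
def fkW (ends : E → V × V) (J : E → ℝ) (ω : E → Bool) : ℝ :=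
  2 ^ numC ends (fun e => ω e = true) *
    ∏ e, (if ω e then 1 - Real.exp (-2 * J e) else Real.exp (-2 * J e))

/-- FK-Ising partition function. -/
def ZFK (ends : E → V × V) (J : E → ℝ) : ℝ :=
  ∑ ω : E → Bool, fkW ends J ω

/-- `σ` is constant on each connected component of the subgraph of open edges `ω`. -/
def constOnComp (ends : E → V × V) (ω : E → Bool) (σ : V → Bool) : Prop :=
  ∀ v w : V, (og ends (fun e => ω e = true)).Reachable v w → σ v = σ w

/-- The coupling `μ₁`: sample `ω` by FK-Ising, then uniform independent spins on clusters. -/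
def μ₁ (ends : E → V × V) (J : E → ℝ) (σ : V → Bool) (ω : E → Bool) : ℝ :=
  (fkW ends J ω / ZFK ends J) * ((2 : ℝ) ^ numC ends (fun e => ω e = true))⁻¹ *
    (if constOnComp ends ω σ then 1 else 0)


/-- The coupling `μ₂`: sample `σ` by Ising, then open each agreeing edge
independently with probability `1 - e^{-2 J_e}`. -/
def μ₂ (ends : E → V × V) (J : E → ℝ) (σ : V → Bool) (ω : E → Bool) : ℝ :=
  (isingW ends J σ / ZIsg ends J) *
    ∏ e, (if σ (ends e).1 = σ (ends e).2 then
            (if ω e then 1 - Real.exp (-2 * J e) else Real.exp (-2 * J e))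
          else (if ω e then 0 else 1))

/-- Edge-wise compatibility characterizes `constOnComp`. -/
lemma compat_iff {V E : Type} (ends : E → V × V) (hloop : ∀ e, (ends e).1 ≠ (ends e).2)
    (ω : E → Bool) (σ : V → Bool) :
    constOnComp ends ω σ ↔ ∀ e, ω e = true → σ (ends e).1 = σ (ends e).2 := by
  constructor
  · intro h e he
    apply h
    apply SimpleGraph.Adj.reachable
    exact ⟨hloop e, Or.inl ⟨e, he, rfl, rfl⟩⟩
  · intro h v w hr
    obtain ⟨p⟩ := hr
    induction p with
    | nil => rfl
    | cons ha p ih =>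
      refine Eq.trans ?_ ih
      obtain ⟨-, hrel | hrel⟩ := ha
      · obtain ⟨e, he, h1, h2⟩ := hrel
        rw [← h1, ← h2]; exact h e he
      · obtain ⟨e, he, h1, h2⟩ := hrel
        rw [← h1, ← h2]; exact (h e he).symm

lemma spin_mul (b c : Bool) : spin b * spin c = if b = c then 1 else -1 := by
  cases b <;> cases c <;> norm_num [spin]

/-- Pointwise Edwards–Sokal identity. -/
lemma key {V E : Type} [Fintype V] [Fintype E] (ends : E → V × V)
    (hloop : ∀ e, (ends e).1 ≠ (ends e).2) (J : E → ℝ) (σ : V → Bool) (ω : E → Bool) :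
    isingW ends J σ *
      ∏ e, (if σ (ends e).1 = σ (ends e).2 then
              (if ω e then 1 - Real.exp (-2 * J e) else Real.exp (-2 * J e))
            else (if ω e then 0 else 1)) =
    Real.exp (∑ e, J e) * ((if constOnComp ends ω σ then 1 else 0) *
      ∏ e, (if ω e then 1 - Real.exp (-2 * J e) else Real.exp (-2 * J e))) := by
  by_cases hc : ∀ e, ω e = true → σ (ends e).1 = σ (ends e).2
  · rw [if_pos ((compat_iff ends hloop ω σ).2 hc), one_mul, isingW, Real.exp_sum,
      Real.exp_sum, ← Finset.prod_mul_distrib, ← Finset.prod_mul_distrib]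
    refine Finset.prod_congr rfl fun e _ => ?_
    by_cases he : σ (ends e).1 = σ (ends e).2
    · rw [if_pos he, mul_assoc, spin_mul, if_pos he, mul_one]
    · have hω : ω e = false := by
        cases hωe : ω e
        · rfl
        · exact absurd (hc e hωe) he
      rw [if_neg he, hω, mul_assoc, spin_mul, if_neg he]
      simp only [Bool.false_eq_true, if_false, mul_one, mul_neg_one]
      rw [← Real.exp_add]
      ring_nf
  · push_neg at hc
    obtain ⟨e, he, hne⟩ := hc
    rw [if_neg (fun h => hne ((compat_iff ends hloop ω σ).1 h e he))]
    rw [Finset.prod_eq_zero (Finset.mem_univ e) (by rw [if_neg hne, he]; simp)]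
    ring

/-- Counting spins constant on clusters. -/
lemma count {V E : Type} [Fintype V] [Fintype E] (ends : E → V × V) (ω : E → Bool) :
    ∑ σ : V → Bool, (if constOnComp ends ω σ then (1 : ℝ) else 0) =
      2 ^ numC ends (fun e => ω e = true) := by
  set G := og ends (fun e => ω e = true) with hG
  have hequiv : {σ : V → Bool // constOnComp ends ω σ} ≃ (G.ConnectedComponent → Bool) :=
    { toFun := fun σc c => σc.1 c.out
      invFun := fun g => ⟨fun v => g (G.connectedComponentMk v),
        fun v w h => congrArg g (SimpleGraph.ConnectedComponent.sound h)⟩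
      left_inv := fun σc => Subtype.ext (funext fun v => σc.2 _ _
        (SimpleGraph.ConnectedComponent.exact (Quot.out_eq (G.connectedComponentMk v))))
      right_inv := fun g => funext fun c => congrArg g (Quot.out_eq c) }
  rw [Finset.sum_boole]
  have h1 : (Finset.univ.filter (constOnComp ends ω)).card =
      Fintype.card {σ : V → Bool // constOnComp ends ω σ} :=
    (Fintype.card_subtype (constOnComp ends ω)).symm
  have h2 : Fintype.card {σ : V → Bool // constOnComp ends ω σ} =
      Nat.card {σ : V → Bool // constOnComp ends ω σ} :=
    (Nat.card_eq_fintype_card).symm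
  have h3 : Nat.card {σ : V → Bool // constOnComp ends ω σ} =
      Nat.card (G.ConnectedComponent → Bool) := Nat.card_congr hequiv
  have h4 : Nat.card (G.ConnectedComponent → Bool) =
      2 ^ numC ends (fun e => ω e = true) := by
    rw [Nat.card_fun, Nat.card_eq_fintype_card (α := Bool), Fintype.card_bool]
    rfl
  rw [h1, h2, h3, h4]
  push_cast
  ring

/-- Partition function identity. -/
lemma Z_eq {V E : Type} [Fintype V] [Fintype E] (ends : E → V × V)
    (hloop : ∀ e, (ends e).1 ≠ (ends e).2) (J : E → ℝ) :
    ZIsg ends J = Real.exp (∑ e, J e) * ZFK ends J := by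
  have hone : ∀ σ : V → Bool, (∑ ω : E → Bool,
      ∏ e, (if σ (ends e).1 = σ (ends e).2 then
              (if ω e then 1 - Real.exp (-2 * J e) else Real.exp (-2 * J e))
            else (if ω e then 0 else 1))) = 1 := by
    intro σ
    have hps : (∑ ω : E → Bool,
        ∏ e, (if σ (ends e).1 = σ (ends e).2 then
              (if ω e then 1 - Real.exp (-2 * J e) else Real.exp (-2 * J e))
            else (if ω e then 0 else 1))) =
        ∏ e, ∑ b : Bool, (if σ (ends e).1 = σ (ends e).2 then
              (if b then 1 - Real.exp (-2 * J e) else Real.exp (-2 * J e))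
            else (if b then 0 else 1)) :=
      (Fintype.prod_sum (ι := E) (κ := fun _ => Bool)
        (fun e b => (if σ (ends e).1 = σ (ends e).2 then
              (if b then 1 - Real.exp (-2 * J e) else Real.exp (-2 * J e))
            else (if b then 0 else 1)))).symm
    rw [hps, Finset.prod_eq_one]
    intro e _
    rw [Fintype.sum_bool]
    by_cases he : σ (ends e).1 = σ (ends e).2 <;> simp [he]
  calc ZIsg ends J = ∑ σ : V → Bool, isingW ends J σ *
        (∑ ω : E → Bool,
          ∏ e, (if σ (ends e).1 = σ (ends e).2 then
              (if ω e then 1 - Real.exp (-2 * J e) else Real.exp (-2 * J e))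
            else (if ω e then 0 else 1))) := by
        refine Finset.sum_congr rfl fun σ _ => ?_
        rw [hone σ, mul_one]
    _ = ∑ σ : V → Bool, ∑ ω : E → Bool, Real.exp (∑ e, J e) *
          ((if constOnComp ends ω σ then 1 else 0) *
            ∏ e, (if ω e then 1 - Real.exp (-2 * J e) else Real.exp (-2 * J e))) := by
        refine Finset.sum_congr rfl fun σ _ => ?_
        rw [Finset.mul_sum]
        exact Finset.sum_congr rfl fun ωx _ => key ends hloop J σ ωx
    _ = Real.exp (∑ e, J e) * ZFK ends J := by
        rw [Finset.sum_comm]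
        rw [ZFK, Finset.mul_sum]
        refine Finset.sum_congr rfl fun ωx _ => ?_
        rw [← Finset.mul_sum, ← Finset.sum_mul, count ends ωx, fkW]

lemma es_aux1 (a b z c : ℝ) (ha : a ≠ 0) : (a * b / z) * a⁻¹ * c = c * b / z := by
  rw [mul_comm (a * b / z) a⁻¹, ← mul_div_assoc, inv_mul_cancel_left₀ ha]
  ring

lemma es_aux2 {e x y z w : ℝ} (he : e ≠ 0) (hkey : x * y = e * w) :
    x / (e * z) * y = w / z := by
  rw [div_mul_eq_mul_div, hkey, mul_div_mul_left _ _ he]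

/-- the two couplings between Ising and FK-Ising coincide. -/
theorem stmt2 [Nonempty V] (ends : E → V × V)
    (hloop : ∀ e, (ends e).1 ≠ (ends e).2)
    (J : E → ℝ) (hJ : ∀ e, 0 < J e) (σ : V → Bool) (ω : E → Bool) :
    μ₁ ends J σ ω = μ₂ ends J σ ω := by
  have h2k : ((2 : ℝ) ^ numC ends (fun e => ω e = true)) ≠ 0 := by positivity
  have hexp : Real.exp (∑ e, J e) ≠ 0 := Real.exp_ne_zero _
  rw [μ₁, μ₂, Z_eq ends hloop J, fkW]
  rw [es_aux1 _ _ _ _ h2k, es_aux2 hexp (key ends hloop J σ ω)]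
end
end

section
/- Let G=(V,E) be a finite graph and J: E→ℝ_{>0}. Let n̂ be distributed according to the random current measure with weights (J_e)_{e∈E}, and let ω∈{0,1}^E be an independent percolation in which each edge e is open (ω_e=1) independently with probability 1−e^{−J_e}. Then the random edge configuration η∈{0,1}^E defined by η_e=1 if and only if (n̂_e>0 or ω_e=1) is distributed according to the FK-Ising measure with weights (1−e^{−2J_e})_{e∈E}. -/
open scoped Classical
noncomputable section

variable {V E : Type} [Fintype V] [Fintype E]

/-- The parity condition: at every vertex, the total multiplicity of incident
edges is even. -/
def parityCond (ends : E → V × V) (n : E → ℕ) : Prop :=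
  ∀ x : V,
    Even (∑ e ∈ Finset.univ.filter (fun e => (ends e).1 = x ∨ (ends e).2 = x), n e)

/-- Unnormalized random current weight `1{parity} ∏_e J_e^{n_e} / n_e!`. -/
def rcW (ends : E → V × V) (J : E → ℝ) (n : E → ℕ) : ℝ :=
  (if parityCond ends n then 1 else 0) * ∏ e, J e ^ n e / ((n e).factorial : ℝ)

/-- Random current partition function. -/
def ZRC (ends : E → V × V) (J : E → ℝ) : ℝ :=
  ∑' n : E → ℕ, rcW ends J n


set_option maxHeartbeats 1000000 in
lemma hasSum_pi_prod (ι : Type) [Fintype ι] (f : ι → ℕ → ℝ)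
    (hf : ∀ i, Summable (fun k => |f i k|)) :
    HasSum (fun n : ι → ℕ => ∏ i, f i (n i)) (∏ i, ∑' k, f i k) := by
  revert f hf
  have key := Fintype.induction_empty_option
    (P := fun (α : Type) (_ : Fintype α) => ∀ (f : α → ℕ → ℝ),
      (∀ i, Summable (fun k => |f i k|)) →
      HasSum (fun n : α → ℕ => ∏ i, f i (n i)) (∏ i, ∑' k, f i k))
    ?_ ?_ ?_ ι
  · exact key
  · intro α β instβ e ih
    letI instα : Fintype α := Fintype.ofEquiv β e.symm
    intro f hf
    have h1 := ih (fun i => f (e i)) (fun i => hf (e i))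
    have heq : (fun n : α → ℕ => ∏ i : α, f (e i) (n i))
        = (fun n : β → ℕ => ∏ j : β, f j (n j)) ∘ ⇑(Equiv.arrowCongr e (Equiv.refl ℕ)) := by
      funext n
      simp only [Function.comp_apply, Equiv.arrowCongr_apply, Equiv.refl_apply]
      exact Fintype.prod_equiv e _ _ (fun i => by simp)
    have h2 : (∏ i : α, ∑' k, f (e i) k) = ∏ j : β, ∑' k, f j k :=
      Fintype.prod_equiv e _ _ (fun i => rfl)
    have h1' : HasSum ((fun n : β → ℕ => ∏ j : β, f j (n j)) ∘ ⇑(Equiv.arrowCongr e (Equiv.refl ℕ)))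
        (∏ j : β, ∑' k, f j k) := by rw [← heq, ← h2]; simpa using h1

    exact ((Equiv.arrowCongr e (Equiv.refl ℕ)).hasSum_iff).mp h1'
  · intro f hf
    have : HasSum (fun n : PEmpty → ℕ => ∏ i, f i (n i))
        (∑ n : PEmpty → ℕ, ∏ i, f i (n i)) := hasSum_fintype _
    simpa using this
  · intro α instα ih f hf
    have hnone : HasSum (f none) (∑' k, f none k) := ((hf none).of_abs).hasSum
    have hsome := ih (fun i => f (some i)) (fun i => hf (some i))
    have habs := ih (fun i k => |f (some i) k|) (fun i => by simpa using (hf (some i)).abs)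
    have hn1 : Summable fun k => ‖f none k‖ := by simpa [Real.norm_eq_abs] using hf none
    have hn2 : Summable fun n : α → ℕ => ‖∏ i, f (some i) (n i)‖ := by
      have := habs.summable
      simpa [Real.norm_eq_abs, Finset.abs_prod] using this
    have hprodnorm : Summable fun x : ℕ × (α → ℕ) => ‖f none x.1 * ∏ i, f (some i) (x.2 i)‖ :=
      Summable.mul_norm (f := f none) (g := fun n : α → ℕ => ∏ i, f (some i) (n i)) hn1 hn2
    have hprodsum : Summable fun x : ℕ × (α → ℕ) => f none x.1 * ∏ i, f (some i) (x.2 i) :=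
      hprodnorm.of_norm
    have hval := HasSum.mul_eq hnone hsome hprodsum.hasSum
    have hps : HasSum (fun x : ℕ × (α → ℕ) => f none x.1 * ∏ i, f (some i) (x.2 i))
        ((∑' k, f none k) * ∏ i, ∑' k, f (some i) k) := by
      rw [hval]; exact hprodsum.hasSum
    have heq : (fun x : ℕ × (α → ℕ) => f none x.1 * ∏ i, f (some i) (x.2 i))
        = (fun n : Option α → ℕ => ∏ i, f i (n i)) ∘ ⇑(Equiv.piOptionEquivProd (β := fun _ => ℕ)).symm := by
      funext x
      simp [Fintype.prod_option]
    rw [heq] at hps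
    have := ((Equiv.piOptionEquivProd (β := fun _ => ℕ)).symm.hasSum_iff).mp hps
    simpa [Fintype.prod_option] using this


section Aux
variable {V E : Type} [Fintype V] [Fintype E]

lemma sum_pi_bool {ι : Type} [Fintype ι] (h : ι → Bool → ℝ) :
    ∑ ω : ι → Bool, ∏ e, h e (ω e) = ∏ e, ∑ b, h e b := by
  rw [Finset.prod_univ_sum, Fintype.piFinset_univ]

lemma spin_mul_self (b : Bool) : spin b * spin b = 1 := by cases b <;> simp [spin]

lemma spin_mul_ne (b c : Bool) (h : b ≠ c) : spin b * spin c = -1 := by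
  cases b <;> cases c <;> simp_all [spin]

lemma sigma_parity (ends : E → V × V) (hloop : ∀ e, (ends e).1 ≠ (ends e).2) (n : E → ℕ) :
    ∑ σ : V → Bool, ∏ e, (spin (σ (ends e).1) * spin (σ (ends e).2)) ^ n e
      = if parityCond ends n then (2:ℝ) ^ Fintype.card V else 0 := by
  have step1 : ∀ σ : V → Bool, ∏ e, (spin (σ (ends e).1) * spin (σ (ends e).2)) ^ n e
      = ∏ x : V, spin (σ x) ^
          (∑ e ∈ Finset.univ.filter (fun e => (ends e).1 = x ∨ (ends e).2 = x), n e) := by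
    intro σ
    have h1 : ∏ e, spin (σ (ends e).1) ^ n e
        = ∏ x : V, spin (σ x) ^ (∑ e ∈ Finset.univ.filter (fun e => (ends e).1 = x), n e) := by
      rw [← Finset.prod_fiberwise Finset.univ (fun e => (ends e).1)
        (fun e => spin (σ (ends e).1) ^ n e)]
      refine Finset.prod_congr rfl (fun x _ => ?_)
      rw [← Finset.prod_pow_eq_pow_sum]
      refine Finset.prod_congr rfl (fun e he => ?_)
      rw [(Finset.mem_filter.mp he).2]
    have h2 : ∏ e, spin (σ (ends e).2) ^ n e
        = ∏ x : V, spin (σ x) ^ (∑ e ∈ Finset.univ.filter (fun e => (ends e).2 = x), n e) := by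
      rw [← Finset.prod_fiberwise Finset.univ (fun e => (ends e).2)
        (fun e => spin (σ (ends e).2) ^ n e)]
      refine Finset.prod_congr rfl (fun x _ => ?_)
      rw [← Finset.prod_pow_eq_pow_sum]
      refine Finset.prod_congr rfl (fun e he => ?_)
      rw [(Finset.mem_filter.mp he).2]
    calc ∏ e, (spin (σ (ends e).1) * spin (σ (ends e).2)) ^ n e
        = ∏ e, (spin (σ (ends e).1) ^ n e * spin (σ (ends e).2) ^ n e) := by
          refine Finset.prod_congr rfl (fun e _ => mul_pow _ _ _)
      _ = (∏ e, spin (σ (ends e).1) ^ n e) * ∏ e, spin (σ (ends e).2) ^ n e :=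
          Finset.prod_mul_distrib
      _ = ∏ x : V, (spin (σ x) ^ (∑ e ∈ Finset.univ.filter (fun e => (ends e).1 = x), n e)
            * spin (σ x) ^ (∑ e ∈ Finset.univ.filter (fun e => (ends e).2 = x), n e)) := by
          rw [h1, h2, Finset.prod_mul_distrib]
      _ = ∏ x : V, spin (σ x) ^
          (∑ e ∈ Finset.univ.filter (fun e => (ends e).1 = x ∨ (ends e).2 = x), n e) := by
          refine Finset.prod_congr rfl (fun x _ => ?_)
          rw [← pow_add, Finset.filter_or, Finset.sum_union]
          refine Finset.disjoint_left.mpr (fun e he1 he2 => ?_)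
          exact hloop e ((Finset.mem_filter.mp he1).2.trans (Finset.mem_filter.mp he2).2.symm)
  simp only [step1]
  rw [sum_pi_bool (fun x b => spin b ^
    (∑ e ∈ Finset.univ.filter (fun e => (ends e).1 = x ∨ (ends e).2 = x), n e))]
  have hb : ∀ d : ℕ, (∑ b : Bool, spin b ^ d) = if Even d then (2:ℝ) else 0 := by
    intro d
    rw [Fintype.sum_bool]
    by_cases hd : Even d
    · norm_num [spin, hd, hd.neg_one_pow]
    · norm_num [spin, hd, (Nat.not_even_iff_odd.mp hd).neg_one_pow]
  simp only [hb]
  by_cases hp : parityCond ends n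
  · simp only [hp, if_true]
    rw [Finset.prod_congr rfl (fun x _ => if_pos (hp x)), Finset.prod_const]
    simp [Finset.card_univ]
  · rw [if_neg hp]
    obtain ⟨x, hx⟩ := not_forall.mp hp
    exact Finset.prod_eq_zero (Finset.mem_univ x) (if_neg hx)

def edgeF (eta : Bool) (s J : ℝ) (k : ℕ) : ℝ :=
  s ^ k * (J ^ k / (k.factorial : ℝ)) *
    ∑ b : Bool, (if b then 1 - Real.exp (-J) else Real.exp (-J)) *
      (if eta = true ↔ (0 < k ∨ b = true) then 1 else 0)

lemma edgeF_eq (eta : Bool) (s J : ℝ) (k : ℕ) :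
    edgeF eta s J k = if eta then (if k = 0 then 1 - Real.exp (-J)
      else (s * J) ^ k / (k.factorial : ℝ)) else (if k = 0 then Real.exp (-J) else 0) := by
  rcases Nat.eq_zero_or_pos k with hk | hk
  · subst hk
    cases eta <;> simp [edgeF, Fintype.sum_bool]
  · have hk0 : k ≠ 0 := hk.ne'
    cases eta <;>
      simp [edgeF, Fintype.sum_bool, hk, hk0, mul_pow, mul_div_assoc] <;> ring

lemma edgeF_hasSum (eta : Bool) (s J : ℝ) :
    HasSum (edgeF eta s J)
      (if eta then Real.exp (s * J) - Real.exp (-J) else Real.exp (-J)) := by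
  have hexp : HasSum (fun k : ℕ => (s * J) ^ k / (k.factorial : ℝ)) (Real.exp (s * J)) := by
    rw [Real.exp_eq_exp_ℝ]
    exact NormedSpace.expSeries_div_hasSum_exp (s * J)
  cases eta
  · have hfun : edgeF false s J = fun k => if k = 0 then Real.exp (-J) else 0 :=
      funext fun k => by rw [edgeF_eq]; simp
    rw [hfun]
    simpa using hasSum_ite_eq 0 (Real.exp (-J))
  · have h2 : HasSum (fun k : ℕ => if k = 0 then -Real.exp (-J) else 0) (-Real.exp (-J)) :=
      hasSum_ite_eq 0 _
    have hfun : edgeF true s J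
        = fun k => (s * J) ^ k / (k.factorial : ℝ) + (if k = 0 then -Real.exp (-J) else 0) := by
      funext k
      rw [edgeF_eq]
      rcases Nat.eq_zero_or_pos k with hk | hk
      · subst hk; simp; ring
      · simp [hk.ne']
    rw [hfun]
    simpa [sub_eq_add_neg] using hexp.add h2

lemma edgeF_abs_summable (eta : Bool) (s J : ℝ) (hs : |s| = 1) (hJ : 0 < J) :
    Summable (fun k => |edgeF eta s J k|) := by
  refine Summable.of_nonneg_of_le (fun k => abs_nonneg _) (fun k => ?_)
    (Real.summable_pow_div_factorial J)
  rw [edgeF_eq]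
  have hJ0 : (0:ℝ) ≤ Real.exp (-J) := (Real.exp_pos _).le
  have hJ1 : Real.exp (-J) ≤ 1 := Real.exp_le_one_iff.mpr (by linarith)
  rcases Nat.eq_zero_or_pos k with hk | hk
  · subst hk
    simp only [pow_zero, Nat.factorial_zero, Nat.cast_one, div_one]
    cases eta
    · simp only [Bool.false_eq_true, if_false, if_pos rfl, if_true]
      rw [abs_of_nonneg hJ0]; exact hJ1
    · simp only [if_pos rfl, if_true]
      rw [abs_of_nonneg (by linarith)]; linarith
  · have hk0 : k ≠ 0 := hk.ne'
    cases eta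
    · simp only [Bool.false_eq_true, if_false, hk0, abs_zero]
      positivity
    · simp only [if_true, hk0, if_false]
      rw [abs_div, abs_pow, abs_mul, hs, one_mul, abs_of_pos hJ, Nat.abs_cast]

lemma constOnComp_iff (ends : E → V × V) (hloop : ∀ e, (ends e).1 ≠ (ends e).2)
    (η : E → Bool) (σ : V → Bool) :
    constOnComp ends η σ ↔ ∀ e, η e = true → σ (ends e).1 = σ (ends e).2 := by
  constructor
  · intro h e he
    refine h _ _ (SimpleGraph.Adj.reachable ?_)
    exact ⟨hloop e, Or.inl ⟨e, he, rfl, rfl⟩⟩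
  · intro h v w hvw
    obtain ⟨p⟩ := hvw
    induction p with
    | nil => rfl
    | cons hadj _ ih =>
      refine Eq.trans ?_ ih
      obtain ⟨-, ⟨e, he, h1, h2⟩ | ⟨e, he, h1, h2⟩⟩ := hadj
      · rw [← h1, ← h2]; exact h e he
      · rw [← h1, ← h2]; exact (h e he).symm

lemma sum_constOnComp (ends : E → V × V) (η : E → Bool) :
    ∑ σ : V → Bool, (if constOnComp ends η σ then (1:ℝ) else 0)
      = 2 ^ numC ends (fun e => η e = true) := by
  rw [Finset.sum_boole]
  have : (Finset.univ.filter (fun σ : V → Bool => constOnComp ends η σ)).card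
      = Nat.card {σ : V → Bool // constOnComp ends η σ} := by
    rw [Nat.card_eq_fintype_card, Fintype.card_subtype]
  rw [this]
  have hequiv : {σ : V → Bool // constOnComp ends η σ}
      ≃ ((og ends (fun e => η e = true)).ConnectedComponent → Bool) := by
    refine ⟨fun σ => Quot.lift σ.1 (fun v w hvw => σ.2 v w hvw), 
      fun f => ⟨fun v => f ((og ends (fun e => η e = true)).connectedComponentMk v),
        fun v w hvw => by
          show f _ = f _
          rw [SimpleGraph.ConnectedComponent.sound hvw]⟩, ?_, ?_⟩
    · intro σ; ext v; rfl
    · intro f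
      funext c
      refine SimpleGraph.ConnectedComponent.ind (fun v => ?_) c
      rfl
  rw [Nat.card_congr hequiv, Nat.card_fun]
  have hbool : Nat.card Bool = 2 := by simp [Nat.card_eq_fintype_card]
  rw [hbool]
  norm_num [numC]



lemma abs_spin_mul (b c : Bool) : |spin b * spin c| = 1 := by
  cases b <;> cases c <;> norm_num [spin]

lemma prod_S (ends : E → V × V) (hloop : ∀ e, (ends e).1 ≠ (ends e).2)
    (J : E → ℝ) (η : E → Bool) (σ : V → Bool) :
    (∏ e, (if η e then Real.exp (spin (σ (ends e).1) * spin (σ (ends e).2) * J e)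
        - Real.exp (-J e) else Real.exp (-J e)))
      = (if constOnComp ends η σ then 1 else 0) * Real.exp (∑ e, J e) *
        ∏ e, (if η e then 1 - Real.exp (-2 * J e) else Real.exp (-2 * J e)) := by
  by_cases hc : constOnComp ends η σ
  · have hfac : ∀ e, (if η e then Real.exp (spin (σ (ends e).1) * spin (σ (ends e).2) * J e)
        - Real.exp (-J e) else Real.exp (-J e))
        = Real.exp (J e) * (if η e then 1 - Real.exp (-2 * J e) else Real.exp (-2 * J e)) := by
      intro e
      by_cases he : η e
      · have hs : σ (ends e).1 = σ (ends e).2 :=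
          (constOnComp_iff ends hloop η σ).mp hc e he
        rw [if_pos he, if_pos he, hs, spin_mul_self]
        rw [one_mul, mul_sub, mul_one, ← Real.exp_add]
        ring_nf
      · rw [if_neg he, if_neg he, ← Real.exp_add]
        ring_nf
    rw [Finset.prod_congr rfl (fun e _ => hfac e), Finset.prod_mul_distrib,
      Real.exp_sum, if_pos hc, one_mul]
  · obtain ⟨e0, he0, hne⟩ : ∃ e, η e = true ∧ σ (ends e).1 ≠ σ (ends e).2 := by
      by_contra hcon
      push_neg at hcon
      exact hc ((constOnComp_iff ends hloop η σ).mpr (fun e he => hcon e he))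
    rw [if_neg hc, zero_mul, zero_mul]
    refine Finset.prod_eq_zero (Finset.mem_univ e0) ?_
    rw [if_pos he0, spin_mul_ne _ _ hne, neg_one_mul, sub_self]

lemma key_pointwise (ends : E → V × V) (hloop : ∀ e, (ends e).1 ≠ (ends e).2)
    (J : E → ℝ) (η : E → Bool) (n : E → ℕ) :
    (∑ ω : E → Bool, rcW ends J n *
        (∏ e, (if ω e then 1 - Real.exp (-J e) else Real.exp (-J e))) *
        (if ∀ e, η e = true ↔ (0 < n e ∨ ω e = true) then 1 else 0))
      = ((2:ℝ) ^ Fintype.card V)⁻¹ *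
        ∑ σ : V → Bool, ∏ e,
          edgeF (η e) (spin (σ (ends e).1) * spin (σ (ends e).2)) (J e) (n e) := by
  have hstep1 : ∀ ω : E → Bool,
      rcW ends J n * (∏ e, (if ω e then 1 - Real.exp (-J e) else Real.exp (-J e))) *
        (if ∀ e, η e = true ↔ (0 < n e ∨ ω e = true) then 1 else 0)
      = rcW ends J n * ∏ e, ((if ω e then 1 - Real.exp (-J e) else Real.exp (-J e)) *
          (if η e = true ↔ (0 < n e ∨ ω e = true) then (1:ℝ) else 0)) := by
    intro ω
    rw [Finset.prod_mul_distrib, ← mul_assoc]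
    congr 1
    rw [Finset.prod_boole]
    congr 1
    simp
  rw [Finset.sum_congr rfl (fun ω _ => hstep1 ω), ← Finset.mul_sum,
    sum_pi_bool (fun e b => (if b then 1 - Real.exp (-J e) else Real.exp (-J e)) *
      (if η e = true ↔ (0 < n e ∨ b = true) then (1:ℝ) else 0))]
  have hpar : (if parityCond ends n then (1:ℝ) else 0)
      = ((2:ℝ) ^ Fintype.card V)⁻¹ * ∑ σ : V → Bool,
          ∏ e, (spin (σ (ends e).1) * spin (σ (ends e).2)) ^ n e := by
    rw [sigma_parity ends hloop n]
    by_cases hp : parityCond ends n <;> simp [hp]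
  rw [rcW, hpar, mul_assoc, mul_assoc]
  congr 1
  rw [Finset.sum_mul]
  refine Finset.sum_congr rfl (fun σ _ => ?_)
  rw [← Finset.prod_mul_distrib, ← Finset.prod_mul_distrib]
  exact Finset.prod_congr rfl (fun e _ => by rw [edgeF]; ring)

lemma key_hasSum (ends : E → V × V) (hloop : ∀ e, (ends e).1 ≠ (ends e).2)
    (J : E → ℝ) (hJ : ∀ e, 0 < J e) (η : E → Bool) :
    HasSum (fun n : E → ℕ => ∑ ω : E → Bool, rcW ends J n *
        (∏ e, (if ω e then 1 - Real.exp (-J e) else Real.exp (-J e))) *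
        (if ∀ e, η e = true ↔ (0 < n e ∨ ω e = true) then 1 else 0))
      (((2:ℝ) ^ Fintype.card V)⁻¹ * Real.exp (∑ e, J e) * fkW ends J η) := by
  have hσ : ∀ σ : V → Bool, HasSum
      (fun n : E → ℕ => ∏ e,
        edgeF (η e) (spin (σ (ends e).1) * spin (σ (ends e).2)) (J e) (n e))
      (∏ e, (if η e then Real.exp (spin (σ (ends e).1) * spin (σ (ends e).2) * J e)
        - Real.exp (-J e) else Real.exp (-J e))) := by
    intro σ
    have h := hasSum_pi_prod E
      (fun e => edgeF (η e) (spin (σ (ends e).1) * spin (σ (ends e).2)) (J e))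
      (fun e => edgeF_abs_summable _ _ _ (abs_spin_mul _ _) (hJ e))
    rwa [Finset.prod_congr rfl (fun e _ => (edgeF_hasSum (η e) _ (J e)).tsum_eq)] at h
  have h2 := (hasSum_sum (fun σ (_ : σ ∈ Finset.univ) => hσ σ)).mul_left
    ((2:ℝ) ^ Fintype.card V)⁻¹
  have h3 : ∑ σ : V → Bool, ∏ e,
      (if η e then Real.exp (spin (σ (ends e).1) * spin (σ (ends e).2) * J e)
        - Real.exp (-J e) else Real.exp (-J e))
      = Real.exp (∑ e, J e) * fkW ends J η := by
    rw [Finset.sum_congr rfl (fun σ _ => prod_S ends hloop J η σ)]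
    rw [← Finset.sum_mul, ← Finset.sum_mul, sum_constOnComp ends η, fkW]
    ring
  rw [h3, ← mul_assoc] at h2
  have hfun : (fun n : E → ℕ => ∑ ω : E → Bool, rcW ends J n *
        (∏ e, (if ω e then 1 - Real.exp (-J e) else Real.exp (-J e))) *
        (if ∀ e, η e = true ↔ (0 < n e ∨ ω e = true) then 1 else 0))
      = (fun n : E → ℕ => ((2:ℝ) ^ Fintype.card V)⁻¹ * ∑ σ : V → Bool, ∏ e,
          edgeF (η e) (spin (σ (ends e).1) * spin (σ (ends e).2)) (J e) (n e)) :=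
    funext (fun n => key_pointwise ends hloop J η n)
  rw [hfun]
  exact h2

lemma sum_eta_ind (P : E → Prop) :
    ∑ η : E → Bool, (if ∀ e, η e = true ↔ P e then (1:ℝ) else 0) = 1 := by
  have hiff : ∀ η : E → Bool, (∀ e, η e = true ↔ P e) ↔ η = fun e => decide (P e) := by
    intro η
    constructor
    · intro h
      funext e
      rw [Bool.eq_iff_iff, h e, decide_eq_true_eq]
    · intro h e
      subst h
      simp
  simp only [hiff]
  rw [Finset.sum_ite_eq' Finset.univ (fun e => decide (P e)) (fun _ => (1:ℝ))]
  simp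

lemma rcW_as_sum (ends : E → V × V) (J : E → ℝ) (n : E → ℕ) :
    rcW ends J n = ∑ η : E → Bool, ∑ ω : E → Bool, rcW ends J n *
        (∏ e, (if ω e then 1 - Real.exp (-J e) else Real.exp (-J e))) *
        (if ∀ e, η e = true ↔ (0 < n e ∨ ω e = true) then 1 else 0) := by
  rw [Finset.sum_comm]
  have hω : ∀ ω : E → Bool, (∑ η : E → Bool, rcW ends J n *
        (∏ e, (if ω e then 1 - Real.exp (-J e) else Real.exp (-J e))) *
        (if ∀ e, η e = true ↔ (0 < n e ∨ ω e = true) then 1 else 0))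
      = rcW ends J n * ∏ e, (if ω e then 1 - Real.exp (-J e) else Real.exp (-J e)) := by
    intro ω
    have hiff : ∀ η : E → Bool, (∀ e, η e = true ↔ (0 < n e ∨ ω e = true)) ↔
        η = fun e => decide (0 < n e ∨ ω e = true) := by
      intro η
      constructor
      · intro h; funext e; rw [Bool.eq_iff_iff, h e, decide_eq_true_eq]
      · intro h e; subst h; simp
    simp only [hiff, mul_ite, mul_one, mul_zero]
    rw [Finset.sum_ite_eq' Finset.univ (fun e => decide (0 < n e ∨ ω e = true))
      (fun _ => rcW ends J n * ∏ e, (if ω e then 1 - Real.exp (-J e) else Real.exp (-J e)))]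
    simp
  rw [Finset.sum_congr rfl (fun ω _ => hω ω), ← Finset.mul_sum,
    sum_pi_bool (fun e b => if b then 1 - Real.exp (-J e) else Real.exp (-J e))]
  have h1 : ∀ e : E, (∑ b : Bool, if b then 1 - Real.exp (-J e) else Real.exp (-J e)) = 1 := by
    intro e
    rw [Fintype.sum_bool]
    simp
  rw [Finset.prod_congr rfl (fun e _ => h1 e), Finset.prod_const_one, mul_one]

lemma ZRC_eq (ends : E → V × V) (hloop : ∀ e, (ends e).1 ≠ (ends e).2)
    (J : E → ℝ) (hJ : ∀ e, 0 < J e) :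
    ZRC ends J = ((2:ℝ) ^ Fintype.card V)⁻¹ * Real.exp (∑ e, J e) * ZFK ends J := by
  rw [ZRC, tsum_congr (rcW_as_sum ends J),
    Summable.tsum_finsetSum (fun η _ => (key_hasSum ends hloop J hJ η).summable),
    Finset.sum_congr rfl (fun η _ => (key_hasSum ends hloop J hJ η).tsum_eq),
    ← Finset.mul_sum, ZFK]

end Aux

/-- if `n̂` is a random current with weights `J` and `ω` an independent
percolation opening each edge with probability `1 - e^{-J_e}`, then the union
configuration `η_e = 1{n̂_e > 0 or ω_e = 1}` is FK-Ising with weights `1 - e^{-2 J_e}`. -/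
theorem stmt3 [Nonempty V] (ends : E → V × V)
    (hloop : ∀ e, (ends e).1 ≠ (ends e).2)
    (J : E → ℝ) (hJ : ∀ e, 0 < J e) (η : E → Bool) :
    ∑' n : E → ℕ, ∑ ω : E → Bool,
      (rcW ends J n / ZRC ends J) *
      (∏ e, (if ω e then 1 - Real.exp (-J e) else Real.exp (-J e))) *
      (if ∀ e, η e = true ↔ (0 < n e ∨ ω e = true) then 1 else 0)
    = fkW ends J η / ZFK ends J := by
  have hc : ((2:ℝ) ^ Fintype.card V)⁻¹ * Real.exp (∑ e, J e) ≠ 0 := by positivity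
  have hpt : ∀ n : E → ℕ, (∑ ω : E → Bool, (rcW ends J n / ZRC ends J) *
        (∏ e, (if ω e then 1 - Real.exp (-J e) else Real.exp (-J e))) *
        (if ∀ e, η e = true ↔ (0 < n e ∨ ω e = true) then 1 else 0))
      = (∑ ω : E → Bool, rcW ends J n *
        (∏ e, (if ω e then 1 - Real.exp (-J e) else Real.exp (-J e))) *
        (if ∀ e, η e = true ↔ (0 < n e ∨ ω e = true) then 1 else 0)) * (ZRC ends J)⁻¹ := by
    intro n
    rw [Finset.sum_mul]
    exact Finset.sum_congr rfl (fun ω _ => by rw [div_eq_mul_inv]; ring)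
  rw [tsum_congr hpt, tsum_mul_right, (key_hasSum ends hloop J hJ η).tsum_eq,
    ZRC_eq ends hloop J hJ, ← div_eq_mul_inv, mul_div_mul_left _ _ hc]
end
end
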